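/- arXiv:1904.03123 — 2 statements merged into one kernel-verified Lean document; each statement's English description precedes it below -/
import Mathlib

section
/- The digamma function satisfies \Gamma'/\Gamma(s) = \log s + O(1/|s|) uniformly in the half-plane Re(s) \ge 0 as |s| \to \infty; that is, there exist constants C > 0 and R > 0 such that |\Gamma'(s)/\Gamma(s) - \log s| \le C/|s| whenever Re(s) \ge 0 and |s| \ge R. -/
/-!
On `0 < re s`, `logGammaSeq n` is a holomorphic logarithm of Euler's `GammaSeq s n` whose
increments are `O(1/n²)` locally uniformly; hence it converges locally uniformly, and
differentiating the limit gives `Γ'/Γ(s) = lim (log n - ∑_{k ≤ n} (s + k)⁻¹)`. Writing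
`log (s + n) - log s` as a telescoping sum and comparing each `log (s + k + 1) - log (s + k)`
with `(s + k + 1)⁻¹` (error at most `‖s + k‖⁻² ≤ 2 (‖s‖ + k)⁻²`) bounds
`‖Γ'/Γ(s) - log s‖` by `2/‖s‖² + 3/‖s‖`. The line `re s = 0` is reached through
`Γ'/Γ(s) = Γ'/Γ(s + 1) - s⁻¹`.
-/

open Complex Set Filter Topology

lemma Real.sum_range_one_div_add_sq_le {x : ℝ} (hx : 0 < x) (n : ℕ) :
    ∑ k ∈ Finset.range n, 1 / (x + k) ^ 2 ≤ 1 / x ^ 2 + 1 / x := by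
  have htel : ∀ n : ℕ,
      ∑ k ∈ Finset.range (n + 1), 1 / (x + k) ^ 2 ≤ 1 / x ^ 2 + 1 / x - 1 / (x + n) := by
    intro n
    induction n with
    | zero => simp
    | succ n ih =>
      have hstep : 1 / (x + (n + 1)) ^ 2 ≤ 1 / (x + n) - 1 / (x + (n + 1)) := by
        rw [div_sub_div _ _ (by positivity) (by positivity),
          div_le_div_iff₀ (by positivity) (by positivity)]
        nlinarith
      rw [Finset.sum_range_succ]
      push_cast
      linarith
  cases n with
  | zero => simp; positivity
  | succ n => exact (htel n).trans (by linarith [show 0 < 1 / (x + n) by positivity])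

namespace Complex

lemma sq_norm_add_sq_le_sq_norm_add_ofReal {s : ℂ} (hs : 0 ≤ s.re) {t : ℝ} (ht : 0 ≤ t) :
    ‖s‖ ^ 2 + t ^ 2 ≤ ‖s + t‖ ^ 2 := by
  simp only [Complex.sq_norm, normSq_apply, add_re, add_im, ofReal_re, ofReal_im, add_zero]
  nlinarith

lemma norm_le_norm_add_ofReal {s : ℂ} (hs : 0 ≤ s.re) {t : ℝ} (ht : 0 ≤ t) :
    ‖s‖ ≤ ‖s + t‖ :=
  (sq_le_sq₀ (norm_nonneg _) (norm_nonneg _)).1 <|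
    (le_add_of_nonneg_right (sq_nonneg t)).trans (sq_norm_add_sq_le_sq_norm_add_ofReal hs ht)

lemma re_add_ofReal_mul (a d : ℂ) (t : ℝ) : (a + t * d).re = a.re + t * d.re := by
  simp

lemma norm_log_add_sub_log_sub_mul_le {a d c : ℂ} {C : ℝ}
    (hslit : ∀ t ∈ Icc (0 : ℝ) 1, a + t * d ∈ slitPlane)
    (hC : ∀ t ∈ Icc (0 : ℝ) 1, ‖(a + t * d)⁻¹ - c‖ ≤ C) :
    ‖log (a + d) - log a - c * d‖ ≤ C * ‖d‖ := by
  have hderiv : ∀ t ∈ Icc (0 : ℝ) 1, HasDerivWithinAt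
      (fun t : ℝ => log (a + t * d) - c * (t * d)) (((a + t * d)⁻¹ - c) * d) (Icc 0 1) t := by
    intro t ht
    have hlin : HasDerivAt (fun t : ℝ => (t : ℂ) * d) d t := by
      simpa using (ofRealCLM.hasDerivAt (x := t)).mul_const d
    exact ((((hlin.const_add a).clog_real (hslit t ht)).fun_sub
      (hlin.const_mul c)).congr_deriv (by ring)).hasDerivWithinAt
  have hbound : ∀ t ∈ Ico (0 : ℝ) 1, ‖((a + t * d)⁻¹ - c) * d‖ ≤ C * ‖d‖ := fun t ht =>
    (norm_mul _ _).trans_le <|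
      mul_le_mul_of_nonneg_right (hC t (Ico_subset_Icc_self ht)) (norm_nonneg d)
  have h := norm_image_sub_le_of_norm_deriv_le_segment' hderiv hbound 1
    (right_mem_Icc.2 zero_le_one)
  simp only [ofReal_one, one_mul, ofReal_zero, zero_mul, add_zero, mul_zero, sub_zero,
    mul_one] at h
  rwa [sub_right_comm] at h

lemma norm_log_one_add_sub_self_le_sq {z : ℂ} (hz : 0 ≤ z.re) :
    ‖log (1 + z) - z‖ ≤ ‖z‖ ^ 2 := by
  have hre : ∀ t ∈ Icc (0 : ℝ) 1, 1 ≤ (1 + t * z).re := fun t ht => by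
    rw [re_add_ofReal_mul, one_re]; nlinarith [ht.1]
  have h := norm_log_add_sub_log_sub_mul_le (c := 1) (C := ‖z‖)
    (fun t ht => Or.inl (by linarith [hre t ht])) fun t ht => by
      have hw : 1 ≤ ‖1 + t * z‖ := (hre t ht).trans (re_le_norm _)
      have hne : 1 + t * z ≠ 0 := ne_zero_of_re_pos (by linarith [hre t ht])
      rw [show (1 + t * z)⁻¹ - 1 = -(t * z) / (1 + t * z) by field_simp; ring, norm_div,
        norm_neg, norm_mul, norm_real, Real.norm_of_nonneg ht.1, div_le_iff₀ (by linarith)]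
      nlinarith [ht.2, norm_nonneg z]
  simpa [sq] using h

lemma norm_log_add_one_sub_log_sub_inv_le {w : ℂ} (hw : 0 < w.re) :
    ‖log (w + 1) - log w - (w + 1)⁻¹‖ ≤ 1 / ‖w‖ ^ 2 := by
  have hre : ∀ t ∈ Icc (0 : ℝ) 1, 0 < (w + t * 1).re := fun t ht => by
    rw [re_add_ofReal_mul, one_re]; linarith [ht.1]
  have h := norm_log_add_sub_log_sub_mul_le (c := (w + 1)⁻¹) (C := 1 / ‖w‖ ^ 2)
    (fun t ht => Or.inl (hre t ht)) fun t ht => by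
      have hw0 : 0 < ‖w‖ := norm_pos_iff.2 (ne_zero_of_re_pos hw)
      have ht' : ‖w‖ ≤ ‖w + t‖ := norm_le_norm_add_ofReal hw.le ht.1
      have h1 : ‖w‖ ≤ ‖w + 1‖ := by simpa using norm_le_norm_add_ofReal hw.le zero_le_one
      rw [mul_one, inv_sub_inv (ne_zero_of_re_pos (by simpa using hre t ht))
        (ne_zero_of_re_pos (by simpa using hre 1 (right_mem_Icc.2 zero_le_one))),
        show w + 1 - (w + t) = ((1 - t : ℝ) : ℂ) by push_cast; ring, norm_div, norm_mul,
        norm_real, Real.norm_of_nonneg (by linarith [ht.2]), sq]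
      exact div_le_div₀ zero_le_one (by linarith [ht.1]) (by positivity)
        (mul_le_mul ht' h1 hw0.le (hw0.le.trans ht'))
  simpa using h

lemma norm_log_add_one_sub_log_le {s : ℂ} (hs : 0 ≤ s.re) (hs0 : s ≠ 0) :
    ‖log (s + 1) - log s‖ ≤ 1 / ‖s‖ := by
  have hslit : ∀ t ∈ Icc (0 : ℝ) 1, s + t * 1 ∈ slitPlane := by
    intro t ht
    rcases ht.1.eq_or_lt with rfl | ht0
    · simpa [mem_slitPlane_iff, Complex.ext_iff, hs.lt_iff_ne, eq_comm, imp_iff_not_or]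
        using hs0
    · exact Or.inl (by rw [re_add_ofReal_mul, one_re]; linarith)
  have h := norm_log_add_sub_log_sub_mul_le (c := 0) (C := 1 / ‖s‖) hslit fun t ht => by
    rw [sub_zero, mul_one, norm_inv, one_div]
    exact inv_anti₀ (norm_pos_iff.2 hs0) (norm_le_norm_add_ofReal hs ht.1)
  simpa using h

lemma norm_log_ofReal_add_sub_log_le {x : ℝ} (hx : 0 < x) {s : ℂ} (hs : 0 ≤ s.re) :
    ‖log (x + s) - log x‖ ≤ ‖s‖ / x := by
  have hre : ∀ t ∈ Icc (0 : ℝ) 1, x ≤ ((x : ℂ) + t * s).re := fun t ht => by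
    rw [re_add_ofReal_mul, ofReal_re]; nlinarith [ht.1]
  have h := norm_log_add_sub_log_sub_mul_le (c := 0) (C := 1 / x)
    (fun t ht => Or.inl (hx.trans_le (hre t ht))) fun t ht => by
      rw [sub_zero, norm_inv, one_div]
      exact inv_anti₀ hx ((hre t ht).trans (re_le_norm _))
  simpa [div_eq_inv_mul] using h

lemma re_add_natCast_pos {s : ℂ} (hs : 0 < s.re) (k : ℕ) : 0 < (s + k).re := by
  simpa using add_pos_of_pos_of_nonneg hs k.cast_nonneg

noncomputable def logGammaSeq (n : ℕ) (s : ℂ) : ℂ :=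
  s * log n + log n.factorial - ∑ k ∈ Finset.range (n + 1), log (s + k)

noncomputable def digammaSeq (n : ℕ) (s : ℂ) : ℂ :=
  log n - ∑ k ∈ Finset.range (n + 1), (s + k)⁻¹

lemma exp_logGammaSeq {n : ℕ} (hn : n ≠ 0) {s : ℂ} (hs : 0 < s.re) :
    exp (logGammaSeq n s) = GammaSeq s n := by
  rw [logGammaSeq, GammaSeq, exp_sub, exp_add, exp_sum, mul_comm s,
    ← cpow_def_of_ne_zero (Nat.cast_ne_zero.2 hn),
    exp_log (Nat.cast_ne_zero.2 n.factorial_ne_zero)]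
  congr 1
  exact Finset.prod_congr rfl fun k _ => exp_log (ne_zero_of_re_pos (re_add_natCast_pos hs k))

lemma hasDerivAt_logGammaSeq (n : ℕ) {s : ℂ} (hs : 0 < s.re) :
    HasDerivAt (logGammaSeq n) (digammaSeq n s) s := by
  have hlog : ∀ k ∈ Finset.range (n + 1),
      HasDerivAt (fun z : ℂ => log (z + k)) (s + k)⁻¹ s := fun k _ => by
    simpa using ((hasDerivAt_id s).add_const (k : ℂ)).clog (Or.inl (re_add_natCast_pos hs k))
  exact ((((hasDerivAt_id s).mul_const (log n)).add_const _).fun_sub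
    (HasDerivAt.fun_sum hlog)).congr_deriv (by simp [digammaSeq])

lemma norm_logGammaSeq_succ_sub_le {n : ℕ} (hn : n ≠ 0) {s : ℂ} (hs : 0 ≤ s.re) {r : ℝ}
    (hr : ‖s‖ ≤ r) :
    ‖logGammaSeq (n + 1) s - logGammaSeq n s‖ ≤ (r + r ^ 2) / n ^ 2 := by
  have hn0 : (0 : ℝ) < n := Nat.cast_pos.2 (Nat.pos_of_ne_zero hn)
  have hcast : (((n : ℝ) + 1 : ℝ) : ℂ) = (n : ℂ) + 1 := by push_cast; ring
  set z := s / (((n : ℝ) + 1 : ℝ) : ℂ)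
  have hzre : 0 ≤ z.re := by
    rw [div_ofReal_re]; exact div_nonneg hs (by positivity)
  have hz : ‖z‖ ≤ r / n := by
    rw [norm_div, norm_real, Real.norm_of_nonneg (by positivity)]
    exact div_le_div₀ ((norm_nonneg s).trans hr) hr hn0 (by linarith)
  have hdiff : logGammaSeq (n + 1) s - logGammaSeq n s =
      s * (log ((n : ℂ) + 1) - log n - ((n : ℂ) + 1)⁻¹) - (log (1 + z) - z) := by
    have hfac : log ((n + 1).factorial : ℂ) = Real.log (n + 1) + log n.factorial := by
      rw [Nat.factorial_succ, Nat.cast_mul, Nat.cast_succ, ← hcast,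
        log_ofReal_mul (by positivity) (Nat.cast_ne_zero.2 n.factorial_ne_zero)]
    have hlast : log (s + (n + 1 : ℕ)) = Real.log (n + 1) + log (1 + z) := by
      rw [show s + (n + 1 : ℕ) = (((n : ℝ) + 1 : ℝ) : ℂ) * (1 + z) by
          rw [mul_add, mul_div_cancel₀ _ (ofReal_ne_zero.2 (by positivity))]
          push_cast; ring,
        log_ofReal_mul (by positivity) (ne_zero_of_re_pos (by simp; linarith))]
    rw [logGammaSeq, logGammaSeq, Finset.sum_range_succ _ (n + 1), hfac, hlast]
    simp only [z, div_eq_mul_inv]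
    push_cast
    ring
  have hlog : ‖log ((n : ℂ) + 1) - log n - ((n : ℂ) + 1)⁻¹‖ ≤ 1 / n ^ 2 := by
    simpa using norm_log_add_one_sub_log_sub_inv_le (w := n) (by simpa using hn0)
  have hlog1 : ‖log (1 + z) - z‖ ≤ ‖z‖ ^ 2 :=
    norm_log_one_add_sub_self_le_sq hzre
  calc ‖logGammaSeq (n + 1) s - logGammaSeq n s‖
      ≤ ‖s‖ * ‖log ((n : ℂ) + 1) - log n - ((n : ℂ) + 1)⁻¹‖ + ‖log (1 + z) - z‖ := by
        rw [hdiff, ← norm_mul]; exact norm_sub_le _ _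
    _ ≤ r * (1 / n ^ 2) + (r / n) ^ 2 := by
        gcongr
        · exact (norm_nonneg s).trans hr
        · exact hlog1.trans (pow_le_pow_left₀ (norm_nonneg z) hz 2)
    _ = (r + r ^ 2) / n ^ 2 := by ring

lemma exists_tendstoUniformlyOn_logGammaSeq (r : ℝ) :
    ∃ F : ℂ → ℂ, TendstoUniformlyOn (fun N => logGammaSeq (N + 1)) F atTop
      {z : ℂ | 0 < z.re ∧ ‖z‖ < r} := by
  set U := {z : ℂ | 0 < z.re ∧ ‖z‖ < r}
  have hu : Summable fun m : ℕ => (r + r ^ 2) / ((m + 1 : ℕ) : ℝ) ^ 2 := by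
    simpa [div_eq_mul_inv] using
      ((summable_nat_add_iff 1).2 (Real.summable_nat_pow_inv.2 one_lt_two)).mul_left (r + r ^ 2)
  have hbound : ∀ m, ∀ z ∈ U,
      ‖logGammaSeq (m + 1 + 1) z - logGammaSeq (m + 1) z‖ ≤
        (r + r ^ 2) / ((m + 1 : ℕ) : ℝ) ^ 2 :=
    fun m z hz => norm_logGammaSeq_succ_sub_le m.succ_ne_zero hz.1.le hz.2.le
  have hconst : TendstoUniformlyOn (fun _ : ℕ => logGammaSeq 1) (logGammaSeq 1) atTop U :=
    fun _ hv => .of_forall fun _ _ _ => refl_mem_uniformity hv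
  refine ⟨_, (hconst.add (tendstoUniformlyOn_tsum_nat hu hbound)).congr
    (.of_forall fun N z _ => ?_)⟩
  simp only [Pi.add_apply, Finset.sum_range_sub (fun m => logGammaSeq (m + 1) z), zero_add,
    add_sub_cancel]

theorem tendsto_deriv_of_tendsto_exp {ι : Type*} {p : Filter ι} [p.NeBot] {f : ι → ℂ → ℂ}
    {F g : ℂ → ℂ} {U : Set ℂ} (hU : IsOpen U) (hf : ∀ i, DifferentiableOn ℂ (f i) U)
    (hF : TendstoLocallyUniformlyOn f F p U)
    (hg : ∀ z ∈ U, Tendsto (fun i => exp (f i z)) p (𝓝 (g z))) {z : ℂ} (hz : z ∈ U) :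
    Tendsto (fun i => deriv (f i) z) p (𝓝 (logDeriv g z)) := by
  have hFd : DifferentiableAt ℂ F z :=
    (hF.differentiableOn (.of_forall hf) hU).differentiableAt (hU.mem_nhds hz)
  have hgF : g =ᶠ[𝓝 z] fun w => exp (F w) := by
    filter_upwards [hU.mem_nhds hz] with w hw
    exact tendsto_nhds_unique (hg w hw) ((continuous_exp.tendsto _).comp (hF.tendsto_at hw))
  have hlogDeriv : logDeriv g z = deriv F z := by
    rw [logDeriv_apply, hgF.deriv_eq, hgF.eq_of_nhds, hFd.hasDerivAt.cexp.deriv,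
      mul_div_cancel_left₀ _ (exp_ne_zero _)]
  rw [hlogDeriv]
  exact (hF.deriv (.of_forall hf) hU).tendsto_at hz

theorem tendsto_digammaSeq {s : ℂ} (hs : 0 < s.re) :
    Tendsto (fun n => digammaSeq n s) atTop (𝓝 (digamma s)) := by
  set U := {z : ℂ | 0 < z.re ∧ ‖z‖ < ‖s‖ + 1}
  have hU : IsOpen U :=
    (isOpen_lt continuous_const continuous_re).inter (isOpen_lt continuous_norm continuous_const)
  obtain ⟨F, hF⟩ := exists_tendstoUniformlyOn_logGammaSeq (‖s‖ + 1)
  have hGamma :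
      ∀ z ∈ U, Tendsto (fun N => exp (logGammaSeq (N + 1) z)) atTop (𝓝 (Gamma z)) :=
    fun z hz => ((GammaSeq_tendsto_Gamma z).comp (tendsto_add_atTop_nat 1)).congr fun N =>
      (exp_logGammaSeq N.succ_ne_zero hz.1).symm
  have h := tendsto_deriv_of_tendsto_exp hU
    (fun N z hz =>
      (hasDerivAt_logGammaSeq (N + 1) hz.1).differentiableAt.differentiableWithinAt)
    hF.tendstoLocallyUniformlyOn hGamma (z := s) ⟨hs, lt_add_one _⟩
  rw [← tendsto_add_atTop_iff_nat 1]
  simpa only [(hasDerivAt_logGammaSeq _ hs).deriv, digamma_def] using h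

lemma norm_digammaSeq_sub_log_le {s : ℂ} (hs : 0 < s.re) {n : ℕ} (hn : n ≠ 0) :
    ‖digammaSeq n s - log s‖ ≤ ‖s‖ / n + (2 / ‖s‖ ^ 2 + 2 / ‖s‖) + 1 / ‖s‖ := by
  have hx : 0 < ‖s‖ := norm_pos_iff.2 (ne_zero_of_re_pos hs)
  set a : ℕ → ℂ := fun k => log (s + k + 1) - log (s + k) - (s + k + 1)⁻¹
  have ha : ∀ k, ‖a k‖ ≤ 2 * (1 / (‖s‖ + k) ^ 2) := fun k => by
    have hsk := sq_norm_add_sq_le_sq_norm_add_ofReal hs.le k.cast_nonneg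
    push_cast at hsk
    refine (norm_log_add_one_sub_log_sub_inv_le (re_add_natCast_pos hs k)).trans ?_
    rw [mul_one_div, div_le_div_iff₀ (lt_of_lt_of_le (by positivity) hsk) (by positivity)]
    nlinarith [sq_nonneg (‖s‖ - k)]
  have hdecomp : digammaSeq n s - log s =
      -(log (n + s) - log n) + ∑ k ∈ Finset.range n, a k - s⁻¹ := by
    have htel : ∑ k ∈ Finset.range n, a k =
        log (s + n) - log s - ∑ k ∈ Finset.range n, (s + k + 1)⁻¹ := by
      rw [Finset.sum_sub_distrib]
      congr 1
      simpa [add_assoc] using Finset.sum_range_sub (fun k => log (s + k)) n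
    rw [htel, digammaSeq, Finset.sum_range_succ', add_comm (n : ℂ) s]
    push_cast
    ring_nf
  have hlog : ‖log (n + s) - log n‖ ≤ ‖s‖ / n := by
    simpa using
      norm_log_ofReal_add_sub_log_le (x := n) (Nat.cast_pos.2 (Nat.pos_of_ne_zero hn)) hs.le
  have hsum : ‖∑ k ∈ Finset.range n, a k‖ ≤ 2 / ‖s‖ ^ 2 + 2 / ‖s‖ := by
    calc ‖∑ k ∈ Finset.range n, a k‖ ≤ ∑ k ∈ Finset.range n, 2 * (1 / (‖s‖ + k) ^ 2) :=
          (norm_sum_le _ _).trans (Finset.sum_le_sum fun k _ => ha k)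
      _ ≤ 2 * (1 / ‖s‖ ^ 2 + 1 / ‖s‖) := by
          rw [← Finset.mul_sum]; gcongr; exact Real.sum_range_one_div_add_sq_le hx n
      _ = 2 / ‖s‖ ^ 2 + 2 / ‖s‖ := by ring
  rw [hdecomp]
  refine (norm_sub_le _ _).trans (add_le_add ((norm_add_le _ _).trans (add_le_add ?_ hsum)) ?_)
  · rwa [norm_neg]
  · rw [norm_inv, one_div]

theorem norm_digamma_sub_log_le {s : ℂ} (hs : 0 < s.re) :
    ‖digamma s - log s‖ ≤ 2 / ‖s‖ ^ 2 + 3 / ‖s‖ := by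
  have hbound : Tendsto (fun n : ℕ => ‖s‖ / n + (2 / ‖s‖ ^ 2 + 2 / ‖s‖) + 1 / ‖s‖) atTop
      (𝓝 (2 / ‖s‖ ^ 2 + 3 / ‖s‖)) := by
    convert ((tendsto_const_div_atTop_nhds_zero_nat ‖s‖).add_const _).add_const _ using 2
    ring
  refine le_of_tendsto_of_tendsto ((tendsto_digammaSeq hs).sub_const (log s)).norm hbound ?_
  filter_upwards [eventually_ne_atTop 0] with n hn
  exact norm_digammaSeq_sub_log_le hs hn

end Complex

theorem stmt2 :
    ∃ C : ℝ, 0 < C ∧ ∃ R : ℝ, 0 < R ∧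
      ∀ s : ℂ, 0 ≤ s.re → R ≤ ‖s‖ →
        ‖deriv Complex.Gamma s / Complex.Gamma s - Complex.log s‖ ≤
          C / ‖s‖ := by
  refine ⟨7, by norm_num, 1, one_pos, fun s hs hs1 => ?_⟩
  have hs0 : s ≠ 0 := norm_pos_iff.1 (one_pos.trans_le hs1)
  have hs_ne_neg_nat : ∀ m : ℕ, s ≠ -m := by
    rintro m rfl
    exact hs0 (by simpa using hs)
  have hmono : ‖s‖ ≤ ‖s + 1‖ := by simpa using norm_le_norm_add_ofReal hs zero_le_one
  have hshift : digamma s - log s =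
      (digamma (s + 1) - log (s + 1)) + (log (s + 1) - log s) - s⁻¹ := by
    rw [digamma_apply_add_one s hs_ne_neg_nat]; ring
  rw [← logDeriv_apply, ← digamma_def, hshift]
  calc _ ≤ ‖digamma (s + 1) - log (s + 1)‖ + ‖log (s + 1) - log s‖ + ‖s⁻¹‖ :=
        (norm_sub_le _ _).trans (by gcongr; exact norm_add_le _ _)
    _ ≤ (2 / ‖s‖ ^ 2 + 3 / ‖s‖) + 1 / ‖s‖ + 1 / ‖s‖ := by
        gcongr
        · exact (norm_digamma_sub_log_le (by simp; linarith)).trans (by gcongr)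
        · exact norm_log_add_one_sub_log_le hs hs0
        · rw [norm_inv, one_div]
    _ ≤ 7 / ‖s‖ := by
        have : 2 / ‖s‖ ^ 2 ≤ 2 / ‖s‖ := by gcongr; exact le_self_pow₀ hs1 two_ne_zero
        linarith [show 2 / ‖s‖ + 3 / ‖s‖ + 1 / ‖s‖ + 1 / ‖s‖ = 7 / ‖s‖ by ring]
end

section
/- For each \tau \in [0,1], the function f(s, \tau) = (1 - \tau)(1 + \sqrt{5} \cdot 5^{-s}) \zeta(s) + \tau L(s, \psi) satisfies the functional equation f(s, \tau) = 5^{-s+1/2} \cdot 2 (2\pi)^{s-1} \Gamma(1 - s) \sin(\pi s / 2) f(1 - s, \tau), where \psi is the Dirichlet character mod 5 with \psi(2) = -1. -/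
/-!
`ψ` is the even primitive quadratic character mod 5, and its Gauss sum is
`2 cos (2π/5) - 2 cos (4π/5) = √5`. Its functional equation therefore reads
`L(s, ψ) = 5^(1/2 - s) χ(s) L(1 - s, ψ)`, where `ζ(s) = χ(s) ζ(1 - s)`. Because
`1 + √5 · 5^(-s) = 5^(1/2 - s) (1 + √5 · 5^(-(1 - s)))`, the zeta term obeys the same functional
equation, hence so does every linear combination of the two.
-/

open Complex
open scoped Real ZMod

noncomputable def zetaFactor (s : ℂ) : ℂ :=
  2 * (2 * π) ^ (s - 1) * Gamma (1 - s) * sin (π * s / 2)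

lemma Complex.cos_pi_mul_one_sub_div_two (s : ℂ) : cos (π * (1 - s) / 2) = sin (π * s / 2) := by
  rw [← cos_pi_div_two_sub]; ring_nf

lemma Complex.ofReal_sqrt_mul_cpow {x : ℝ} (hx : 0 < x) (s : ℂ) :
    (√x : ℂ) * (x : ℂ) ^ s = (x : ℂ) ^ (s + 1 / 2) := by
  rw [Real.sqrt_eq_rpow, ofReal_cpow hx.le, cpow_add _ _ (by exact_mod_cast hx.ne'), mul_comm]
  norm_num

lemma Real.two_mul_cos_two_pi_div_five_sub_two_mul_cos_four_pi_div_five :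
    2 * cos (2 * π / 5) - 2 * cos (4 * π / 5) = √5 := by
  have h₂ : cos (2 * π / 5) = 2 * cos (π / 5) ^ 2 - 1 := by
    rw [← cos_two_mul]; ring_nf
  have h₄ : cos (4 * π / 5) = - cos (π / 5) := by
    rw [← cos_pi_sub]; ring_nf
  rw [h₂, h₄, cos_pi_div_five]
  nlinarith [sq_sqrt (show (0 : ℝ) ≤ 5 by norm_num)]

lemma riemannZeta_eq_zetaFactor_mul {s : ℂ} (hs₀ : s ≠ 0) (hs : ∀ n : ℕ, s ≠ n + 1) :
    riemannZeta s = zetaFactor s * riemannZeta (1 - s) := by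
  have h := riemannZeta_one_sub (s := 1 - s) (fun n h ↦ hs n (by linear_combination -h))
    (fun h ↦ hs₀ (by linear_combination -h))
  rw [sub_sub_cancel, cos_pi_mul_one_sub_div_two, neg_sub] at h
  rw [h, zetaFactor]

namespace ZMod

variable {N : ℕ} [NeZero N]

lemma LFunction_smul (c : ℂ) (Φ : ZMod N → ℂ) (s : ℂ) :
    LFunction (c • Φ) s = c * LFunction Φ s := by
  simp only [LFunction, Finset.mul_sum, Pi.smul_apply, smul_eq_mul]
  congr 1 with j
  ring

lemma LFunction_eq_mul_LFunction_one_sub_of_even {Φ Ψ : ZMod N → ℂ} (hΦ : Φ.Even) {c : ℂ}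
    (hc : 𝓕 Φ = c • Ψ) {s : ℂ} (hs : ∀ n : ℕ, s ≠ n + 1) (hΦs : Φ 0 = 0 ∨ s ≠ 0) :
    LFunction Φ s = c * N ^ (-s) * zetaFactor s * LFunction Ψ (1 - s) := by
  have h := LFunction_one_sub Φ (s := 1 - s) (fun n h ↦ hs n (by linear_combination -h))
    (hΦs.imp_right fun h₀ h ↦ h₀ (by linear_combination -h))
  rw [sub_sub_cancel, show (fun x ↦ Φ (-x)) = Φ from funext hΦ, hc, LFunction_smul,
    sub_sub_cancel_left, neg_sub] at h
  have hcos : cexp (π * I * (1 - s) / 2) + cexp (-π * I * (1 - s) / 2) = 2 * sin (π * s / 2) := by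
    rw [← cos_pi_mul_one_sub_div_two, two_cos]; ring_nf
  rw [h, zetaFactor]
  linear_combination
    (N : ℂ) ^ (-s) * (2 * π) ^ (s - 1) * Gamma (1 - s) * c * LFunction Ψ (1 - s) * hcos

end ZMod

namespace DirichletCharacter

section Primitive

variable {N : ℕ} [NeZero N] {χ : DirichletCharacter ℂ N}

lemma IsPrimitive.fourierTransform_eq_gaussSum_smul_inv (hχ : χ.IsPrimitive) (hχ_even : χ.Even) :
    𝓕 χ = gaussSum χ ZMod.stdAddChar • ⇑χ⁻¹ := by
  ext k
  rw [hχ.fourierTransform_eq_inv_mul_gaussSum, MulChar.inv_apply_eq_inv', hχ_even.eval_neg,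
    ← MulChar.inv_apply_eq_inv', Pi.smul_apply, smul_eq_mul, mul_comm]

lemma IsPrimitive.LFunction_eq_gaussSum_mul (hχ : χ.IsPrimitive) (hχ_even : χ.Even) (hN : N ≠ 1)
    {s : ℂ} (hs : ∀ n : ℕ, s ≠ n + 1) :
    LFunction χ s = gaussSum χ ZMod.stdAddChar * N ^ (-s) * zetaFactor s * LFunction χ⁻¹ (1 - s) :=
  ZMod.LFunction_eq_mul_LFunction_one_sub_of_even hχ_even.to_fun
    (hχ.fourierTransform_eq_gaussSum_smul_inv hχ_even) hs (.inl (χ.map_zero' hN))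

end Primitive

section ModFive

variable {R : Type*} [CommRing R] {ψ : DirichletCharacter R 5}

lemma map_four_of_map_two_eq_neg_one (hψ : ψ 2 = -1) : ψ 4 = 1 := by
  rw [show (4 : ZMod 5) = 2 * 2 by decide, map_mul, hψ, neg_one_mul, neg_neg]

lemma map_three_of_map_two_eq_neg_one (hψ : ψ 2 = -1) : ψ 3 = -1 := by
  rw [show (3 : ZMod 5) = 2 * 4 by decide, map_mul, hψ, map_four_of_map_two_eq_neg_one hψ, mul_one]

lemma even_of_map_two_eq_neg_one (hψ : ψ 2 = -1) : ψ.Even := by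
  rw [Even, show (-1 : ZMod 5) = 4 by decide, map_four_of_map_two_eq_neg_one hψ]

lemma isQuadratic_of_map_two_eq_neg_one (hψ : ψ 2 = -1) : ψ.IsQuadratic := by
  intro a
  fin_cases a
  · exact .inl (ψ.map_zero' (by decide))
  · exact .inr (.inl ψ.map_one)
  · exact .inr (.inr hψ)
  · exact .inr (.inr (map_three_of_map_two_eq_neg_one hψ))
  · exact .inr (.inl (map_four_of_map_two_eq_neg_one hψ))

lemma isPrimitive_of_map_two_eq_neg_one [NeZero (2 : R)] (hψ : ψ 2 = -1) : ψ.IsPrimitive := by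
  have hψ_ne : ψ ≠ 1 := by
    rintro rfl
    rw [MulChar.one_apply (by decide : IsUnit (2 : ZMod 5)), eq_neg_iff_add_eq_zero,
      one_add_one_eq_two] at hψ
    exact two_ne_zero hψ
  refine (Nat.prime_five.eq_one_or_self_of_dvd _ ψ.conductor_dvd_level).resolve_left ?_
  exact fun h ↦ hψ_ne (eq_one_iff_conductor_eq_one.mpr h)

lemma gaussSum_stdAddChar_eq_sqrt_five {ψ : DirichletCharacter ℂ 5} (hψ : ψ 2 = -1) :
    gaussSum ψ ZMod.stdAddChar = √5 := by
  have two_cos_eq (j : ℤ) (a : ℂ) (ha : a = 2 * π * j / 5) :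
      ZMod.stdAddChar (j : ZMod 5) + ZMod.stdAddChar ((-j : ℤ) : ZMod 5) = 2 * cos a := by
    rw [ZMod.stdAddChar_coe, ZMod.stdAddChar_coe, two_cos, ha]; push_cast; ring_nf
  have h₁ := two_cos_eq 1 (2 * π / 5) (by ring)
  have h₂ := two_cos_eq 2 (4 * π / 5) (by ring)
  rw [show ((1 : ℤ) : ZMod 5) = 1 by decide, show ((-1 : ℤ) : ZMod 5) = 4 by decide] at h₁
  rw [show ((2 : ℤ) : ZMod 5) = 2 by decide, show ((-2 : ℤ) : ZMod 5) = 3 by decide] at h₂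
  rw [gaussSum, show Finset.univ = ({0, 1, 2, 3, 4} : Finset (ZMod 5)) by decide]
  simp +decide only [Finset.mem_insert, Finset.mem_singleton, Finset.sum_insert,
    Finset.sum_singleton]
  rw [ψ.map_zero' (by decide), map_one, hψ, map_three_of_map_two_eq_neg_one hψ,
    map_four_of_map_two_eq_neg_one hψ,
    ← Real.two_mul_cos_two_pi_div_five_sub_two_mul_cos_four_pi_div_five]
  push_cast
  linear_combination h₁ - h₂

lemma LFunction_eq_sqrt_five_mul_of_map_two_eq_neg_one {ψ : DirichletCharacter ℂ 5}
    (hψ : ψ 2 = -1) {s : ℂ} (hs : ∀ n : ℕ, s ≠ n + 1) :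
    LFunction ψ s = √5 * 5 ^ (-s) * zetaFactor s * LFunction ψ (1 - s) := by
  have h := (isPrimitive_of_map_two_eq_neg_one hψ).LFunction_eq_gaussSum_mul
    (even_of_map_two_eq_neg_one hψ) (by norm_num) hs
  rwa [gaussSum_stdAddChar_eq_sqrt_five hψ, (isQuadratic_of_map_two_eq_neg_one hψ).inv,
    Nat.cast_ofNat] at h

end ModFive

end DirichletCharacter

theorem stmt13_general (ψ : DirichletCharacter ℂ 5) (hψ : ψ 2 = -1)
    (τ : ℝ)
    (f : ℂ → ℂ)
    (hf : ∀ s : ℂ, f s =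
      (1 - (τ : ℂ)) * (1 + (Real.sqrt 5 : ℂ) * (5:ℂ) ^ (-s)) * riemannZeta s +
        (τ : ℂ) * DirichletCharacter.LFunction ψ s) :
    ∀ s : ℂ, s ≠ 0 → (∀ n : ℕ, s ≠ (n : ℂ) + 1) →
      f s = (5:ℂ) ^ (-s + 1/2) * 2 * (2 * (Real.pi : ℂ)) ^ (s - 1) *
        Complex.Gamma (1 - s) * Complex.sin ((Real.pi : ℂ) * s / 2) * f (1 - s) := by
  intro s hs₀ hs
  have hζ := riemannZeta_eq_zetaFactor_mul hs₀ hs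
  have hL := DirichletCharacter.LFunction_eq_sqrt_five_mul_of_map_two_eq_neg_one hψ hs
  have h₁ : √5 * (5 : ℂ) ^ (-s) = 5 ^ (-s + 1 / 2) := by
    simpa using ofReal_sqrt_mul_cpow (x := 5) (by norm_num) (-s)
  have h₂ : (5 : ℂ) ^ (-s + 1 / 2) * (√5 * 5 ^ (-(1 - s))) = 1 := by
    have h := ofReal_sqrt_mul_cpow (x := 5) (by norm_num) (-(1 - s))
    push_cast at h
    rw [h, ← cpow_add _ _ (by norm_num), show -s + 1 / 2 + (-(1 - s) + 1 / 2) = 0 by ring,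
      cpow_zero]
  calc f s = 5 ^ (-s + 1 / 2) * zetaFactor s * f (1 - s) := by
        rw [hf, hf, hζ, hL]
        linear_combination ((1 - τ) * zetaFactor s * riemannZeta (1 - s) +
          τ * zetaFactor s * ψ.LFunction (1 - s)) * h₁ -
          (1 - τ) * zetaFactor s * riemannZeta (1 - s) * h₂
    _ = _ := by rw [zetaFactor]; ring

theorem stmt13 (ψ : DirichletCharacter ℂ 5) (hψ : ψ 2 = -1)
    (τ : ℝ) (hτ : τ ∈ Set.Icc (0:ℝ) 1)
    (f : ℂ → ℂ)
    (hf : ∀ s : ℂ, f s =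
      (1 - (τ : ℂ)) * (1 + (Real.sqrt 5 : ℂ) * (5:ℂ) ^ (-s)) * riemannZeta s +
        (τ : ℂ) * DirichletCharacter.LFunction ψ s) :
    ∀ s : ℂ, s ≠ 0 → (∀ n : ℕ, s ≠ (n : ℂ) + 1) →
      f s = (5:ℂ) ^ (-s + 1/2) * 2 * (2 * (Real.pi : ℂ)) ^ (s - 1) *
        Complex.Gamma (1 - s) * Complex.sin ((Real.pi : ℂ) * s / 2) * f (1 - s) :=
  stmt13_general ψ hψ τ f hf
end
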